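/- arXiv:math/9911041 — 2 statements merged into one kernel-verified Lean document; each statement's English description precedes it below -/
import Mathlib

section
/- Let $\{\beta_1,\ldots,\beta_l\}$ be an orthonormal basis of $\mathbb{R}^l$ (or $\mathbb{Z}^l$ with the standard inner product), set $\alpha_i := \beta_i - \beta_{i+1}$ for $1 \le i \le l$ with the convention $\beta_{l+1} = 0$, and define the group homomorphism $\eta : \bigoplus_i \mathbb{Z}\alpha_i \to \mathbb{Z}^l/2\mathbb{Z}^l$ by $\eta(\sum_i n_i \alpha_i) := \sum_i n_i \beta_{i+1} \bmod 2$. For $\nu \in \bigoplus_i \mathbb{Z}\alpha_i$ set $|\nu| := (\nu, \beta_1+\cdots+\beta_l) \bmod 2$. Then for all $\nu, \nu'$ in the lattice $\bigoplus_i \mathbb{Z}\alpha_i$, one has $(\nu, \eta(\nu')) + (\eta(\nu), \nu') + (\nu, \nu') \equiv |\nu|\,|\nu'| \pmod 2$. -/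
/-- Standard inner product on `ℤ^l`. -/
def ip {l : ℕ} (x y : Fin l → ℤ) : ℤ := ∑ j, x j * y j

/-- `β i` : standard basis vector. -/
def beta {l : ℕ} (i : Fin l) : Fin l → ℤ := fun j => if j = i then 1 else 0

/-- `β_{i+1}` with the convention `β_{l+1} = 0`. -/
def betaSucc {l : ℕ} (i : Fin l) : Fin l → ℤ :=
  fun j => if (j : ℕ) = (i : ℕ) + 1 then 1 else 0

/-- `α i = β i - β_{i+1}`. -/
def alphaRoot {l : ℕ} (i : Fin l) : Fin l → ℤ := beta i - betaSucc i

/-- For `ν = ∑ n i • α i`, `η(ν) = ∑ n i • β_{i+1}` (taken mod 2). -/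
def etaMap {l : ℕ} (n : Fin l → ℤ) : Fin l → ℤ := ∑ i, n i • betaSucc i

/-!
Write `ν = ∑ nᵢ αᵢ`. Since `αᵢ = βᵢ - βᵢ₊₁`, the coordinates of `ν` are `n - η(n)`, where `η` shifts
`n` one place up and drops its last entry. The left-hand side therefore equals `(n, n') - (η n, η n')`
over `ℤ`, and the shift cancels all but the last term: it is `n_l n'_l`. The coordinate sum of `ν`
telescopes to `n_l` as well, so the congruence is in fact an equality of integers.
-/

lemma ip_sub_add_ip_sub_add_ip_sub {l : ℕ} (x x' u u' : Fin l → ℤ) :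
    ip (x - u) u' + ip u (x' - u') + ip (x - u) (x' - u') = ip x x' - ip u u' := by
  simp only [ip, ← Finset.sum_add_distrib, ← Finset.sum_sub_distrib, Pi.sub_apply]
  exact Finset.sum_congr rfl fun _ _ => by ring

lemma sum_smul_alphaRoot {l : ℕ} (n : Fin l → ℤ) :
    ∑ i, n i • alphaRoot i = n - etaMap n := by
  simp only [alphaRoot, smul_sub, Finset.sum_sub_distrib, etaMap]
  ext j
  simp [beta, Finset.sum_apply]

lemma etaMap_eq_cons {k : ℕ} (n : Fin (k + 1) → ℤ) :
    etaMap n = Fin.cons 0 fun j => n j.castSucc := by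
  ext j
  refine Fin.cases ?_ (fun j => ?_) j
  · simp [etaMap, Finset.sum_apply, betaSucc]
  · have hshift : ∀ i : Fin (k + 1), betaSucc i j.succ = if i = j.castSucc then 1 else 0 := by
      intro i
      simp only [betaSucc, Fin.val_succ, Fin.ext_iff, Fin.val_castSucc, add_left_inj]
      exact if_congr eq_comm rfl rfl
    simp [etaMap, Finset.sum_apply, hshift]

lemma ip_sub_ip_etaMap {k : ℕ} (n n' : Fin (k + 1) → ℤ) :
    ip n n' - ip (etaMap n) (etaMap n') = n (Fin.last k) * n' (Fin.last k) := by
  simp [ip, etaMap_eq_cons, Fin.sum_univ_succ, Fin.sum_univ_castSucc (f := fun j => n j * n' j)]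

lemma sum_sub_etaMap {k : ℕ} (n : Fin (k + 1) → ℤ) :
    ∑ j, (n - etaMap n) j = n (Fin.last k) := by
  simp [etaMap_eq_cons, Finset.sum_sub_distrib, Fin.sum_univ_castSucc (f := n)]

theorem ip_etaMap_add_ip_etaMap_add_ip_eq_sum_mul_sum (l : ℕ) (n n' : Fin l → ℤ) :
    ip (∑ i, n i • alphaRoot i) (etaMap n')
      + ip (etaMap n) (∑ i, n' i • alphaRoot i)
      + ip (∑ i, n i • alphaRoot i) (∑ i, n' i • alphaRoot i)
    = (∑ j, (∑ i, n i • alphaRoot i) j) * (∑ j, (∑ i, n' i • alphaRoot i) j) := by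
  rw [sum_smul_alphaRoot, sum_smul_alphaRoot, ip_sub_add_ip_sub_add_ip_sub]
  cases l with
  | zero => simp [ip]
  | succ k => rw [ip_sub_ip_etaMap, sum_sub_etaMap, sum_sub_etaMap]

theorem stmt0 (l : ℕ) (n n' : Fin l → ℤ) :
    (ip (∑ i, n i • alphaRoot i) (etaMap n')
      + ip (etaMap n) (∑ i, n' i • alphaRoot i)
      + ip (∑ i, n i • alphaRoot i) (∑ i, n' i • alphaRoot i))
    ≡ (∑ j, (∑ i, n i • alphaRoot i) j) * (∑ j, (∑ i, n' i • alphaRoot i) j)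
    [ZMOD 2] := by
  rw [ip_etaMap_add_ip_etaMap_add_ip_eq_sum_mul_sum]
end

section
/- Let $R = \bigoplus_{i \in \mathbb{Z}_2} R_i$ be a $\mathbb{Z}_2$-graded ring which is a domain, and suppose $R_1 \neq 0$. Let $M = M_0 \oplus M_1$ be a $\mathbb{Z}_2$-graded faithful $R$-module with $R_i M_j \subseteq M_{i+j}$. If $f \in R$ is $\mathbb{Z}_2$-homogeneous and $f(M_i) = 0$ for some fixed $i \in \mathbb{Z}_2$, then $f = 0$. -/
/-!
Since `f` is homogeneous, `f²` is even and still kills `Mᵢ`. For a nonzero odd `p`, the element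
`f p f²` kills `Mᵢ` (through `f²`) and `M_{i+1}` (`p f²` carries it into `Mᵢ`, which `f` kills),
so it is zero by faithfulness; as `R` is a domain and `p ≠ 0`, `f = 0`.
-/

theorem ZMod.two_eq_or_eq_add_one (i j : ZMod 2) : j = i ∨ j = i + 1 := by
  revert i j
  decide

section Graded

variable {R M : Type*} [Ring R] [AddCommGroup M] [Module R M]
  {ℛ : ZMod 2 → AddSubgroup R} {ℳ : ZMod 2 → AddSubgroup M}

theorem mul_self_mem_zero_of_mem
    (hRmul : ∀ (i j : ZMod 2) (a b : R), a ∈ ℛ i → b ∈ ℛ j → a * b ∈ ℛ (i + j))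
    {f : R} {d : ZMod 2} (hf : f ∈ ℛ d) : f * f ∈ ℛ 0 := by
  simpa only [CharTwo.add_self_eq_zero] using hRmul d d f f hf hf

theorem eq_zero_of_smul_components_eq_zero
    (hMsum : ∀ m : M, ∃ m₀ ∈ ℳ 0, ∃ m₁ ∈ ℳ 1, m = m₀ + m₁)
    (hfaith : ∀ r : R, (∀ m : M, r • m = 0) → r = 0)
    {r : R} (hr : ∀ j, ∀ m ∈ ℳ j, r • m = 0) : r = 0 := by
  refine hfaith r fun m => ?_
  obtain ⟨m₀, hm₀, m₁, hm₁, rfl⟩ := hMsum m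
  rw [smul_add, hr 0 m₀ hm₀, hr 1 m₁ hm₁, add_zero]

theorem mul_mul_smul_eq_zero_of_kills_component
    (hsmul : ∀ (i j : ZMod 2) (a : R) (m : M), a ∈ ℛ i → m ∈ ℳ j → a • m ∈ ℳ (i + j))
    {a p e : R} {i : ZMod 2} (hp : p ∈ ℛ 1) (he : e ∈ ℛ 0)
    (ha : ∀ m ∈ ℳ i, a • m = 0) (he_kill : ∀ m ∈ ℳ i, e • m = 0)
    (j : ZMod 2) (m : M) (hm : m ∈ ℳ j) : (a * p * e) • m = 0 := by
  rw [mul_smul, mul_smul]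
  rcases ZMod.two_eq_or_eq_add_one i j with rfl | rfl
  · rw [he_kill m hm, smul_zero, smul_zero]
  · have hem : e • m ∈ ℳ (i + 1) := by simpa using hsmul 0 (i + 1) e m he hm
    have hpem : p • e • m ∈ ℳ i := by
      simpa [add_left_comm, CharTwo.add_self_eq_zero] using hsmul 1 (i + 1) p _ hp hem
    exact ha _ hpem

end Graded

theorem stmt4_general {R M : Type*} [Ring R] [IsDomain R] [AddCommGroup M] [Module R M]
    (ℛ : ZMod 2 → AddSubgroup R) (ℳ : ZMod 2 → AddSubgroup M)
    -- graded multiplication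
    (hRmul : ∀ (i j : ZMod 2) (a b : R), a ∈ ℛ i → b ∈ ℛ j → a * b ∈ ℛ (i + j))
    -- the odd part of `R` is nonzero
    (hR1 : ∃ p ∈ ℛ 1, p ≠ 0)
    -- `M` is the sum of its graded pieces
    (hMsum : ∀ m : M, ∃ m₀ ∈ ℳ 0, ∃ m₁ ∈ ℳ 1, m = m₀ + m₁)
    -- graded action : `Rᵢ • Mⱼ ⊆ M_{i+j}`
    (hsmul : ∀ (i j : ZMod 2) (a : R) (m : M), a ∈ ℛ i → m ∈ ℳ j → a • m ∈ ℳ (i + j))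
    -- `M` is faithful
    (hfaith : ∀ r : R, (∀ m : M, r • m = 0) → r = 0)
    (f : R) (d : ZMod 2) (hf : f ∈ ℛ d)
    (i : ZMod 2) (hkill : ∀ m ∈ ℳ i, f • m = 0) :
    f = 0 := by
  obtain ⟨p, hp, hp0⟩ := hR1
  have hff_kill : ∀ m ∈ ℳ i, (f * f) • m = 0 := fun m hm => by
    rw [mul_smul, hkill m hm, smul_zero]
  have hzero : f * p * (f * f) = 0 :=
    eq_zero_of_smul_components_eq_zero hMsum hfaith
      (mul_mul_smul_eq_zero_of_kills_component hsmul hp (mul_self_mem_zero_of_mem hRmul hf)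
        hkill hff_kill)
  simpa [hp0] using hzero

/-- Let `R = R₀ ⊕ R₁` be a `ℤ/2`-graded domain with `R₁ ≠ 0`, and `M = M₀ ⊕ M₁` a
`ℤ/2`-graded faithful `R`-module with `Rᵢ Mⱼ ⊆ M_{i+j}`.  If `f ∈ R` is homogeneous
and kills some graded component `Mᵢ`, then `f = 0`. -/
theorem stmt4 {R M : Type*} [Ring R] [IsDomain R] [AddCommGroup M] [Module R M]
    (ℛ : ZMod 2 → AddSubgroup R) (ℳ : ZMod 2 → AddSubgroup M)
    -- `R` is the sum of its graded pieces
    (hRsum : ∀ r : R, ∃ r₀ ∈ ℛ 0, ∃ r₁ ∈ ℛ 1, r = r₀ + r₁)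
    -- the graded pieces of `R` intersect trivially
    (hRdisj : ∀ r : R, r ∈ ℛ 0 → r ∈ ℛ 1 → r = 0)
    -- graded multiplication
    (hRmul : ∀ (i j : ZMod 2) (a b : R), a ∈ ℛ i → b ∈ ℛ j → a * b ∈ ℛ (i + j))
    -- the odd part of `R` is nonzero
    (hR1 : ∃ p ∈ ℛ 1, p ≠ 0)
    -- `M` is the sum of its graded pieces
    (hMsum : ∀ m : M, ∃ m₀ ∈ ℳ 0, ∃ m₁ ∈ ℳ 1, m = m₀ + m₁)
    -- graded action : `Rᵢ • Mⱼ ⊆ M_{i+j}`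
    (hsmul : ∀ (i j : ZMod 2) (a : R) (m : M), a ∈ ℛ i → m ∈ ℳ j → a • m ∈ ℳ (i + j))
    -- `M` is faithful
    (hfaith : ∀ r : R, (∀ m : M, r • m = 0) → r = 0)
    (f : R) (d : ZMod 2) (hf : f ∈ ℛ d)
    (i : ZMod 2) (hkill : ∀ m ∈ ℳ i, f • m = 0) :
    f = 0 :=
  stmt4_general ℛ ℳ hRmul hR1 hMsum hsmul hfaith f d hf i hkill
end
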